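/- For every k ≥ 1, every t > 0, x ∈ ℝ, and every constant C > 0, ∫_{Δₖ(t)×ℝᵏ} ∏_{l=1}^{k+1} (t_l - t_{l-1})^{-1} · exp(-(x_l - x_{l-1})²/(C(t_l - t_{l-1}))) dt dx ≤ (πC)^{k/2} · t^{-1/2} · e^{-x²/(Ct)} · ∫_{Δₖ(t)} ∏_{l=1}^{k+1} (t_l - t_{l-1})^{-1/2} dt, where t₀ = 0, x₀ = 0, t_{k+1} = t, x_{k+1} = x. -/

import Mathlib

open MeasureTheory

/-- The `k`-dimensional time simplex `{0 < t₁ < ⋯ < tₖ < t}`. -/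
def timeSimplex (k : ℕ) (t : ℝ) : Set (Fin k → ℝ) :=
  {τ | StrictMono τ ∧ ∀ i, τ i ∈ Set.Ioo 0 t}

/-- The sequence `0, τ₁, …, τₖ, t`. -/
noncomputable def extSeq (k : ℕ) (t : ℝ) (τ : Fin k → ℝ) : Fin (k + 2) → ℝ :=
  Fin.cons (0 : ℝ) (Fin.snoc τ t)

/-- `∏_{l=1}^{k+1} (t_l - t_{l-1})^{-1/2}` with `t₀ = 0` and `t_{k+1} = t`. -/
noncomputable def dirichletIntegrand (k : ℕ) (t : ℝ) (τ : Fin k → ℝ) : ℝ :=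
  ∏ l : Fin (k + 1),
    (extSeq k t τ l.succ - extSeq k t τ l.castSucc) ^ (-(1 / 2) : ℝ)

/-- `∏_{l=1}^{k+1} (t_l - t_{l-1})⁻¹ · exp(-(x_l - x_{l-1})²/(C(t_l - t_{l-1})))`
with `t₀ = 0, x₀ = 0, t_{k+1} = t, x_{k+1} = x`. -/
noncomputable def spaceTimeIntegrand (k : ℕ) (t x C : ℝ)
    (p : (Fin k → ℝ) × (Fin k → ℝ)) : ℝ :=
  ∏ l : Fin (k + 1),
    (extSeq k t p.1 l.succ - extSeq k t p.1 l.castSucc)⁻¹ *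
      Real.exp (-(extSeq k x p.2 l.succ - extSeq k x p.2 l.castSucc) ^ 2 /
        (C * (extSeq k t p.1 l.succ - extSeq k t p.1 l.castSucc)))

/-!
For fixed times `0 = t₀ < t₁ < ⋯ < tₖ < tₖ₊₁ = t`, each factor `(tₗ - tₗ₋₁)⁻¹ e^{-(Δx)²/(C Δt)}`
is `(tₗ - tₗ₋₁)^{-1/2} √(πC)` times the Gaussian kernel of variance `C (tₗ - tₗ₋₁) / 2`.
Gaussian kernels convolve by adding variances, so integrating out the intermediate positions
`x₁, …, xₖ` one at a time leaves the kernel of variance `C t / 2` at `x`, i.e.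
`(πCt)^{-1/2} e^{-x²/(Ct)}`. Hence the spatial integral equals the Dirichlet integrand times
`(πC)^{k/2} t^{-1/2} e^{-x²/(Ct)}`, and by Tonelli the inequality holds with equality.
-/

open Real

theorem Fin.strictMono_snoc_iff {α : Type*} [Preorder α] {n : ℕ} {f : Fin n → α} {a : α} :
    StrictMono (Fin.snoc f a : Fin (n + 1) → α) ↔ StrictMono f ∧ ∀ i, f i < a := by
  rw [← Fin.insertNth_last', Fin.strictMono_insertNth_iff]
  simp [Fin.castSucc_lt_last, not_le_of_gt (Fin.castSucc_lt_last _)]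

theorem Fin.sum_succ_sub_castSucc {G : Type*} [AddCommGroup G] {n : ℕ} (f : Fin (n + 1) → G) :
    ∑ i : Fin n, (f i.succ - f i.castSucc) = f (Fin.last n) - f 0 := by
  rw [Finset.sum_sub_distrib, sub_eq_sub_iff_add_eq_add, add_comm, ← Fin.sum_univ_succ,
    Fin.sum_univ_castSucc, add_comm]

theorem MeasureTheory.lintegral_fin_cons {α : Type*} [MeasureSpace α]
    [SigmaFinite (volume : Measure α)] {n : ℕ} {f : (Fin (n + 1) → α) → ENNReal}
    (hf : Measurable f) :
    ∫⁻ σ, f σ = ∫⁻ σ' : Fin n → α, ∫⁻ y, f (Fin.cons y σ') := by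
  have hcons := (volume_preserving_piFinSuccAbove (fun _ : Fin (n + 1) => α) 0).symm
  rw [← hcons.lintegral_comp hf, Measure.volume_eq_prod, lintegral_prod_symm']
  · simp [MeasurableEquiv.piFinSuccAbove_symm_apply, Fin.consEquiv]
  · exact hf.comp (MeasurableEquiv.measurable _)

theorem inv_mul_sqrt_mul_eq_sqrt_mul_rpow {a d : ℝ} (ha : 0 ≤ a) (hd : 0 < d) :
    d⁻¹ * √(a * d) = √a * d ^ (-(1 / 2) : ℝ) := by
  rw [sqrt_mul ha, rpow_neg hd.le, ← sqrt_eq_rpow]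
  have hsq := sq_sqrt hd.le
  have hs : 0 < √d := sqrt_pos.2 hd
  generalize √d = s at hsq hs ⊢
  subst hsq
  field_simp

theorem sqrt_pow_succ_div_sqrt_mul {a t : ℝ} (ha : 0 < a) (ht : 0 ≤ t) (k : ℕ) :
    √a ^ (k + 1) / √(a * t) = a ^ ((k : ℝ) / 2) * t ^ (-(1 / 2) : ℝ) := by
  rw [sqrt_mul ha.le, pow_succ, mul_comm (√a), mul_div_mul_right _ _ (sqrt_pos.2 ha).ne',
    sqrt_eq_rpow, sqrt_eq_rpow, ← rpow_natCast, ← rpow_mul ha.le, rpow_neg ht, div_eq_mul_inv]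
  ring_nf

section extSeq

variable {k : ℕ} {t : ℝ} {τ : Fin k → ℝ}

@[simp] theorem extSeq_zero : extSeq k t τ 0 = 0 := rfl

@[simp] theorem extSeq_last : extSeq k t τ (Fin.last (k + 1)) = t := by
  simp [extSeq, ← Fin.succ_last]

@[fun_prop]
theorem measurable_extSeq_apply (j : Fin (k + 2)) : Measurable fun τ => extSeq k t τ j := by
  induction j using Fin.cases with
  | zero => exact measurable_const
  | succ i =>
    induction i using Fin.lastCases with
    | last => simp [extSeq]
    | cast m => simpa [extSeq] using measurable_pi_apply m

theorem sum_extSeq_succ_sub_castSucc :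
    ∑ l : Fin (k + 1), (extSeq k t τ l.succ - extSeq k t τ l.castSucc) = t := by
  rw [Fin.sum_succ_sub_castSucc, extSeq_last, extSeq_zero, sub_zero]

theorem strictMono_extSeq (ht : 0 < t) (hτ : τ ∈ timeSimplex k t) :
    StrictMono (extSeq k t τ) := by
  obtain ⟨hmono, hmem⟩ := hτ
  rw [extSeq, Fin.strictMono_cons, Fin.strictMono_snoc_iff]
  refine ⟨fun j => ?_, hmono, fun i => (hmem i).2⟩
  induction j using Fin.lastCases with
  | last => simp [ht]
  | cast m => simpa using (hmem m).1

theorem extSeq_succ_sub_castSucc_pos (ht : 0 < t) (hτ : τ ∈ timeSimplex k t)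
    (l : Fin (k + 1)) :
    0 < extSeq k t τ l.succ - extSeq k t τ l.castSucc :=
  sub_pos.2 (strictMono_extSeq ht hτ Fin.castSucc_lt_succ)

end extSeq

/-- The density of the centred normal law of variance `c / 2`. -/
noncomputable def gaussKernel (c z : ℝ) : ℝ :=
  exp (-z ^ 2 / c) / √(π * c)

theorem gaussKernel_nonneg (c z : ℝ) : 0 ≤ gaussKernel c z := by
  unfold gaussKernel
  positivity

section gaussKernel

variable {a b : ℝ}

theorem gaussKernel_mul_gaussKernel_sub (ha : 0 < a) (hb : 0 < b) (y z : ℝ) :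
    gaussKernel a y * gaussKernel b (z - y) =
      (√(π * a) * √(π * b))⁻¹ * exp (-z ^ 2 / (a + b)) *
        exp (-((a + b) / (a * b)) * (y - a * z / (a + b)) ^ 2) := by
  unfold gaussKernel
  rw [div_mul_div_comm, div_eq_inv_mul, mul_assoc, ← exp_add, ← exp_add]
  congr 2
  field_simp
  ring

theorem integrable_gaussKernel_mul_gaussKernel_sub (ha : 0 < a) (hb : 0 < b) (z : ℝ) :
    Integrable fun y => gaussKernel a y * gaussKernel b (z - y) := by
  simp_rw [gaussKernel_mul_gaussKernel_sub ha hb _ z]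
  exact ((integrable_exp_neg_mul_sq (by positivity)).comp_sub_right _).const_mul _

theorem integral_gaussKernel_mul_gaussKernel_sub (ha : 0 < a) (hb : 0 < b) (z : ℝ) :
    ∫ y, gaussKernel a y * gaussKernel b (z - y) = gaussKernel (a + b) z := by
  simp_rw [gaussKernel_mul_gaussKernel_sub ha hb _ z]
  rw [integral_const_mul,
    integral_sub_right_eq_self (fun y => exp (-((a + b) / (a * b)) * y ^ 2)), integral_gaussian]
  have hvar : π / ((a + b) / (a * b)) = π * a * (π * b) / (π * (a + b)) := by
    field_simp
  rw [hvar, sqrt_div' _ (by positivity), sqrt_mul (x := π * a) (by positivity), gaussKernel]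
  have hs : 0 < √(π * a) * √(π * b) := by positivity
  generalize √(π * a) * √(π * b) = s at hs ⊢
  field_simp

theorem lintegral_gaussKernel_mul_gaussKernel_sub (ha : 0 < a) (hb : 0 < b) (z : ℝ) :
    ∫⁻ y, ENNReal.ofReal (gaussKernel a y * gaussKernel b (z - y)) =
      ENNReal.ofReal (gaussKernel (a + b) z) := by
  rw [← integral_gaussKernel_mul_gaussKernel_sub ha hb z,
    ofReal_integral_eq_lintegral_ofReal (integrable_gaussKernel_mul_gaussKernel_sub ha hb z)
      (.of_forall fun y => mul_nonneg (gaussKernel_nonneg _ _) (gaussKernel_nonneg _ _))]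

end gaussKernel

noncomputable def gaussChain (n : ℕ) (c : Fin (n + 1) → ℝ) (x : ℝ) (σ : Fin n → ℝ) : ℝ :=
  ∏ l, gaussKernel (c l) (extSeq n x σ l.succ - extSeq n x σ l.castSucc)

section gaussChain

variable {n : ℕ}

theorem measurable_gaussChain (c : Fin (n + 1) → ℝ) (x : ℝ) :
    Measurable (gaussChain n c x) := by
  unfold gaussChain gaussKernel
  fun_prop

theorem gaussChain_succ_cons (c : Fin (n + 2) → ℝ) (x y : ℝ) (σ : Fin n → ℝ) :
    gaussChain (n + 1) c x (Fin.cons y σ) =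
      gaussKernel (c 0) y * gaussKernel (c 1) (extSeq n x σ 1 - y) *
        ∏ m : Fin n, gaussKernel (c m.succ.succ)
          (extSeq n x σ m.succ.succ - extSeq n x σ m.succ.castSucc) := by
  have hcons : extSeq (n + 1) x (Fin.cons y σ) = Fin.cons 0 (Fin.cons y (Fin.snoc σ x)) := by
    rw [extSeq, ← Fin.cons_snoc_eq_snoc_cons]
  rw [gaussChain, hcons]
  simp only [extSeq, Fin.prod_univ_succ, ← Fin.succ_zero_eq_one, ← Fin.succ_castSucc,
    Fin.cons_succ, Fin.cons_zero, Fin.castSucc_zero, sub_zero, mul_assoc]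

theorem gaussChain_cons_add (c : Fin (n + 2) → ℝ) (x : ℝ) (σ : Fin n → ℝ) :
    gaussChain n (Fin.cons (c 0 + c 1) fun m => c m.succ.succ) x σ =
      gaussKernel (c 0 + c 1) (extSeq n x σ 1) *
        ∏ m : Fin n, gaussKernel (c m.succ.succ)
          (extSeq n x σ m.succ.succ - extSeq n x σ m.succ.castSucc) := by
  simp only [gaussChain, extSeq, Fin.prod_univ_succ, ← Fin.succ_zero_eq_one, ← Fin.succ_castSucc,
    Fin.cons_succ, Fin.cons_zero, Fin.castSucc_zero, sub_zero]

theorem lintegral_gaussChain_succ_cons {c : Fin (n + 2) → ℝ} (hc₀ : 0 < c 0) (hc₁ : 0 < c 1)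
    (x : ℝ) (σ : Fin n → ℝ) :
    ∫⁻ y, ENNReal.ofReal (gaussChain (n + 1) c x (Fin.cons y σ)) =
      ENNReal.ofReal (gaussChain n (Fin.cons (c 0 + c 1) fun m => c m.succ.succ) x σ) := by
  have htail : 0 ≤ ∏ m : Fin n, gaussKernel (c m.succ.succ)
      (extSeq n x σ m.succ.succ - extSeq n x σ m.succ.castSucc) :=
    Finset.prod_nonneg fun _ _ => gaussKernel_nonneg _ _
  simp_rw [gaussChain_succ_cons, gaussChain_cons_add, ENNReal.ofReal_mul' htail]
  rw [lintegral_mul_const' _ _ ENNReal.ofReal_ne_top,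
    lintegral_gaussKernel_mul_gaussKernel_sub hc₀ hc₁]

theorem lintegral_gaussChain {c : Fin (n + 1) → ℝ} (hc : ∀ l, 0 < c l) (x : ℝ) :
    ∫⁻ σ, ENNReal.ofReal (gaussChain n c x σ) = ENNReal.ofReal (gaussKernel (∑ l, c l) x) := by
  induction n with
  | zero =>
    have hσ (σ : Fin 0 → ℝ) : gaussChain 0 c x σ = gaussKernel (c 0) x := by
      simp [gaussChain]
      rfl
    simp [hσ, volume_pi]
  | succ n ih =>
    have hc' : ∀ l, 0 < (Fin.cons (c 0 + c 1) fun m => c m.succ.succ : Fin (n + 1) → ℝ) l :=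
      Fin.cases (add_pos (hc 0) (hc 1)) fun m => hc _
    rw [lintegral_fin_cons (measurable_gaussChain c x).ennreal_ofReal]
    simp_rw [lintegral_gaussChain_succ_cons (hc 0) (hc 1), ih hc']
    simp [Fin.sum_univ_succ, add_assoc]

end gaussChain

theorem measurableSet_timeSimplex (k : ℕ) (t : ℝ) : MeasurableSet (timeSimplex k t) := by
  have hmono : MeasurableSet {τ : Fin k → ℝ | StrictMono τ} := by
    simp only [StrictMono, Set.ofPred_forall]
    exact .iInter fun i => .iInter fun j => .iInter fun _ =>
      measurableSet_lt (measurable_pi_apply i) (measurable_pi_apply j)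
  simp only [timeSimplex, Set.ofPred_and, Set.ofPred_forall]
  exact hmono.inter (.iInter fun i => measurable_pi_apply i measurableSet_Ioo)

theorem measurable_spaceTimeIntegrand (k : ℕ) (t x C : ℝ) :
    Measurable (spaceTimeIntegrand k t x C) := by
  unfold spaceTimeIntegrand
  fun_prop

theorem measurable_dirichletIntegrand (k : ℕ) (t : ℝ) :
    Measurable (dirichletIntegrand k t) := by
  unfold dirichletIntegrand
  fun_prop

section slice

variable {k : ℕ} {t C : ℝ} {τ : Fin k → ℝ}

theorem dirichletIntegrand_nonneg (ht : 0 < t) (hτ : τ ∈ timeSimplex k t) :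
    0 ≤ dirichletIntegrand k t τ :=
  Finset.prod_nonneg fun l _ => rpow_nonneg (extSeq_succ_sub_castSucc_pos ht hτ l).le _

theorem spaceTimeIntegrand_nonneg (ht : 0 < t) (x : ℝ) {p : (Fin k → ℝ) × (Fin k → ℝ)}
    (hp : p.1 ∈ timeSimplex k t) : 0 ≤ spaceTimeIntegrand k t x C p :=
  Finset.prod_nonneg fun l _ =>
    mul_nonneg (inv_nonneg.2 (extSeq_succ_sub_castSucc_pos ht hp l).le) (exp_nonneg _)

theorem spaceTimeIntegrand_eq_mul_gaussChain (ht : 0 < t) (hC : 0 < C)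
    (hτ : τ ∈ timeSimplex k t) (x : ℝ) (σ : Fin k → ℝ) :
    spaceTimeIntegrand k t x C (τ, σ) =
      (∏ l : Fin (k + 1), (extSeq k t τ l.succ - extSeq k t τ l.castSucc)⁻¹ *
          √(π * C * (extSeq k t τ l.succ - extSeq k t τ l.castSucc))) *
        gaussChain k (fun l => C * (extSeq k t τ l.succ - extSeq k t τ l.castSucc)) x σ := by
  rw [spaceTimeIntegrand, gaussChain, ← Finset.prod_mul_distrib]
  refine Finset.prod_congr rfl fun l _ => ?_
  have hd := extSeq_succ_sub_castSucc_pos ht hτ l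
  have hs : 0 < √(π * C * (extSeq k t τ l.succ - extSeq k t τ l.castSucc)) := by positivity
  rw [gaussKernel, ← mul_assoc π]
  field_simp

theorem lintegral_spaceTimeIntegrand_slice (ht : 0 < t) (hC : 0 < C)
    (hτ : τ ∈ timeSimplex k t) (x : ℝ) :
    ∫⁻ σ, ENNReal.ofReal (spaceTimeIntegrand k t x C (τ, σ)) =
      ENNReal.ofReal ((π * C) ^ ((k : ℝ) / 2) * t ^ (-(1 / 2) : ℝ) *
        exp (-x ^ 2 / (C * t)) * dirichletIntegrand k t τ) := by
  have hd := extSeq_succ_sub_castSucc_pos ht hτ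
  have hπC : 0 < π * C := by positivity
  have hweight : ∏ l : Fin (k + 1), (extSeq k t τ l.succ - extSeq k t τ l.castSucc)⁻¹ *
      √(π * C * (extSeq k t τ l.succ - extSeq k t τ l.castSucc)) =
        √(π * C) ^ (k + 1) * dirichletIntegrand k t τ := by
    simp_rw [inv_mul_sqrt_mul_eq_sqrt_mul_rpow hπC.le (hd _), Finset.prod_mul_distrib,
      Finset.prod_const, Finset.card_univ, Fintype.card_fin, dirichletIntegrand]
  have hweight_nonneg : 0 ≤ √(π * C) ^ (k + 1) * dirichletIntegrand k t τ :=
    mul_nonneg (by positivity) (dirichletIntegrand_nonneg ht hτ)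
  simp_rw [spaceTimeIntegrand_eq_mul_gaussChain ht hC hτ, hweight,
    ENNReal.ofReal_mul hweight_nonneg]
  rw [lintegral_const_mul' _ _ ENNReal.ofReal_ne_top,
    lintegral_gaussChain fun l => mul_pos hC (hd l), ← Finset.mul_sum,
    sum_extSeq_succ_sub_castSucc, ← ENNReal.ofReal_mul hweight_nonneg]
  congr 1
  rw [gaussKernel, ← mul_assoc, ← sqrt_pow_succ_div_sqrt_mul hπC ht.le]
  ring

end slice

theorem setIntegral_spaceTimeIntegrand (k : ℕ) {t C : ℝ} (ht : 0 < t) (hC : 0 < C) (x : ℝ) :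
    ∫ p in {p : (Fin k → ℝ) × (Fin k → ℝ) | p.1 ∈ timeSimplex k t},
        spaceTimeIntegrand k t x C p =
      (π * C) ^ ((k : ℝ) / 2) * t ^ (-(1 / 2) : ℝ) * exp (-x ^ 2 / (C * t)) *
        ∫ τ in timeSimplex k t, dirichletIntegrand k t τ := by
  have hK : 0 ≤ (π * C) ^ ((k : ℝ) / 2) * t ^ (-(1 / 2) : ℝ) * exp (-x ^ 2 / (C * t)) := by
    positivity
  have hS := measurableSet_timeSimplex k t
  have hset : {p : (Fin k → ℝ) × (Fin k → ℝ) | p.1 ∈ timeSimplex k t} =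
      timeSimplex k t ×ˢ Set.univ := by
    ext p
    simp
  have hrestrict : volume.restrict (timeSimplex k t ×ˢ (Set.univ : Set (Fin k → ℝ))) =
      (volume.restrict (timeSimplex k t)).prod volume := by
    rw [Measure.volume_eq_prod, ← Measure.restrict_prod_eq_prod_univ]
  rw [hset, integral_eq_lintegral_of_nonneg_ae
      ((ae_restrict_iff' (hS.prod .univ)).2 (.of_forall fun p hp =>
        spaceTimeIntegrand_nonneg ht x hp.1))
      (measurable_spaceTimeIntegrand k t x C).aestronglyMeasurable,
    integral_eq_lintegral_of_nonneg_ae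
      ((ae_restrict_iff' hS).2 (.of_forall fun τ hτ => dirichletIntegrand_nonneg ht hτ))
      (measurable_dirichletIntegrand k t).aestronglyMeasurable,
    hrestrict,
    lintegral_prod _ (measurable_spaceTimeIntegrand k t x C).ennreal_ofReal.aemeasurable,
    setLIntegral_congr_fun hS fun τ hτ => lintegral_spaceTimeIntegrand_slice ht hC hτ x]
  simp_rw [ENNReal.ofReal_mul hK]
  rw [lintegral_const_mul' _ _ ENNReal.ofReal_ne_top, ENNReal.toReal_mul,
    ENNReal.toReal_ofReal hK]

theorem spaceTime_chaos_L2_bound_general (k : ℕ) (t x C : ℝ)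
    (ht : 0 < t) (hC : 0 < C) :
    ∫ p in {p : (Fin k → ℝ) × (Fin k → ℝ) | p.1 ∈ timeSimplex k t},
        spaceTimeIntegrand k t x C p ≤
      (Real.pi * C) ^ ((k : ℝ) / 2) * t ^ (-(1 / 2) : ℝ) *
        Real.exp (-x ^ 2 / (C * t)) *
        ∫ τ in timeSimplex k t, dirichletIntegrand k t τ :=
  (setIntegral_spaceTimeIntegrand k ht hC x).le

theorem spaceTime_chaos_L2_bound (k : ℕ) (hk : 1 ≤ k) (t x C : ℝ)
    (ht : 0 < t) (hC : 0 < C) :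
    ∫ p in {p : (Fin k → ℝ) × (Fin k → ℝ) | p.1 ∈ timeSimplex k t},
        spaceTimeIntegrand k t x C p ≤
      (Real.pi * C) ^ ((k : ℝ) / 2) * t ^ (-(1 / 2) : ℝ) *
        Real.exp (-x ^ 2 / (C * t)) *
        ∫ τ in timeSimplex k t, dirichletIntegrand k t τ :=
  spaceTime_chaos_L2_bound_general k t x C ht hC
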